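/- arXiv:1108.2668 — 2 statements merged into one kernel-verified Lean document; each statement's English description precedes it below -/
import Mathlib

section
/- Let a ≥ 1 be real and let g ∈ G be the element with T_g = diag(√a, 1/√a) and θ_g(t) = (1/π) arctan(tan(πt)/a) (extended compatibly). Then inf_{λ ∈ ℂ} Δ(gλ) = (1/2) log a, where λ ∈ ℂ acts on G as the subgroup of lifts of conformal maps and Δ(g) = max{sup_t |θ_g(t) − t|, log‖T_g‖, log‖T_g^{−1}‖}. -/
open scoped Real

/-- The universal cover `G` of `GL₂⁺(ℝ)`, realized as pairs `g = (T_g, θ_g)` where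
`T_g ∈ GL₂⁺(ℝ)` and `θ_g : ℝ → ℝ` is increasing (and continuous) with
`θ_g(t+1) = θ_g(t) + 1`, inducing the same map as `T_g` on the circle
`ℝ/2ℤ ≅ (ℝ² ∖ {0})/ℝ_{>0}`. -/
structure GT where
  T : Matrix (Fin 2) (Fin 2) ℝ
  θ : ℝ → ℝ
  det_pos : 0 < T.det
  mono : StrictMono θ
  cont : Continuous θ
  per : ∀ t, θ (t + 1) = θ t + 1
  compat : ∀ t : ℝ, ∃ r : ℝ, 0 < r ∧
    T.mulVec ![Real.cos (π * t), Real.sin (π * t)] =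
      r • ![Real.cos (π * θ t), Real.sin (π * θ t)]

/-- The operator (euclidean) norm of a `2 × 2` real matrix. -/
noncomputable def opNorm (T : Matrix (Fin 2) (Fin 2) ℝ) : ℝ :=
  ‖LinearMap.toContinuousLinearMap (Matrix.toEuclideanLin T)‖

/-- `Δ(g) = max { sup_t |θ_g(t) − t|, log ‖T_g‖, log ‖T_g⁻¹‖ }`. -/
noncomputable def GT.Δ (g : GT) : ℝ :=
  max (⨆ t : ℝ, |g.θ t - t|) (max (Real.log (opNorm g.T)) (Real.log (opNorm g.T⁻¹)))

/-- The identity element of `G`. -/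
def GT.one : GT where
  T := 1
  θ := id
  det_pos := by simp
  mono := strictMono_id
  cont := continuous_id
  per := fun t => rfl
  compat := fun t => ⟨1, one_pos, by simp [Matrix.one_mulVec]⟩

/-- Multiplication in `G`: `(T_g, θ_g) · (T_h, θ_h) = (T_g T_h, θ_g ∘ θ_h)`. -/
noncomputable def GT.mul (g h : GT) : GT where
  T := g.T * h.T
  θ := g.θ ∘ h.θ
  det_pos := by rw [Matrix.det_mul]; exact mul_pos g.det_pos h.det_pos
  mono := g.mono.comp h.mono
  cont := g.cont.comp h.cont
  per := fun t => by simp [h.per t, g.per (h.θ t)]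
  compat := by
    intro t
    obtain ⟨r, hr, hv⟩ := h.compat t
    obtain ⟨s, hs, hw⟩ := g.compat (h.θ t)
    refine ⟨r * s, mul_pos hr hs, ?_⟩
    rw [← Matrix.mulVec_mulVec, hv, Matrix.mulVec_smul, hw, smul_smul]; rfl

lemma GT.theta_add_nat (g : GT) (t : ℝ) (n : ℕ) : g.θ (t + n) = g.θ t + n := by
  induction n with
  | zero => simp
  | succ k ih =>
      push_cast
      rw [← add_assoc, g.per, ih]
      ring

lemma GT.surj (g : GT) : Function.Surjective g.θ := by
  apply Continuous.surjective g.cont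
  · apply Filter.tendsto_atTop_atTop.2
    intro b
    obtain ⟨n, hn⟩ := exists_nat_ge (b - g.θ 0)
    refine ⟨(n : ℝ), fun a ha => ?_⟩
    have := g.theta_add_nat 0 n
    have h2 : g.θ (0 + (n : ℝ)) ≤ g.θ a := g.mono.monotone (by simpa using ha)
    rw [this] at h2
    linarith
  · apply Filter.tendsto_atBot_atBot.2
    intro b
    obtain ⟨n, hn⟩ := exists_nat_ge (g.θ 0 - b)
    refine ⟨-(n : ℝ), fun a ha => ?_⟩
    have := g.theta_add_nat (-(n : ℝ)) n
    have h2 : g.θ a ≤ g.θ (-(n : ℝ)) := g.mono.monotone ha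
    simp only [neg_add_cancel] at this
    linarith

/-- `θ_g` as an order isomorphism of `ℝ`. -/
noncomputable def GT.orderIso (g : GT) : ℝ ≃o ℝ :=
  StrictMono.orderIsoOfSurjective g.θ g.mono g.surj

lemma GT.orderIso_apply (g : GT) (t : ℝ) : g.orderIso t = g.θ t := rfl

/-- Inversion in `G`: `(T_g, θ_g)⁻¹ = (T_g⁻¹, θ_g⁻¹)`. -/
noncomputable def GT.inv (g : GT) : GT where
  T := g.T⁻¹
  θ := g.orderIso.symm
  det_pos := by
    rw [Matrix.det_nonsing_inv, Ring.inverse_eq_inv']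
    exact inv_pos.2 g.det_pos
  mono := g.orderIso.symm.strictMono
  cont := OrderIso.continuous _
  per := by
    intro t
    apply g.orderIso.injective
    have h1 : g.orderIso (g.orderIso.symm (t + 1)) = t + 1 := g.orderIso.apply_symm_apply _
    have h2 : g.orderIso (g.orderIso.symm t + 1) = t + 1 := by
      rw [g.orderIso_apply, g.per, ← g.orderIso_apply, g.orderIso.apply_symm_apply]
    rw [h1, h2]
  compat := by
    intro t
    obtain ⟨r, hr, hv⟩ := g.compat (g.orderIso.symm t)
    rw [show g.θ (g.orderIso.symm t) = t from g.orderIso.apply_symm_apply t] at hv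
    refine ⟨r⁻¹, inv_pos.2 hr, ?_⟩
    have hdet : g.T.det ≠ 0 := ne_of_gt g.det_pos
    have := congrArg (fun v => g.T⁻¹.mulVec v) hv
    simp only [Matrix.mulVec_mulVec, Matrix.mulVec_smul] at this
    rw [Matrix.nonsing_inv_mul g.T (isUnit_iff_ne_zero.2 hdet), Matrix.one_mulVec] at this
    rw [this, smul_smul, inv_mul_cancel₀ (ne_of_gt hr), one_smul]

/-- The left-invariant metric `d_G(g, h) = Δ(h⁻¹ g)` on `G`. -/
noncomputable def dG (g h : GT) : ℝ := GT.Δ (GT.mul (GT.inv h) g)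

/-! Write `c = e^{-πy}` and `s = √a`. Since rotations are unitary, the matrix part of `Δ(g λ)`
is `max (log (c s)) (log (s / c))`, which is at least the average `log s`, with equality at
`λ = 0`. There `θ_g(t) - t = (arctan (u / a) - arctan u) / π` with `u = tan (π t)`, which is
at most `log a / (2π)` in absolute value: `x ↦ arctan (u eˣ)` is `1/2`-Lipschitz, as its
derivative is `v / (1 + v²)` with `v = u eˣ`. -/

open Matrix Real Set
open scoped Matrix.Norms.L2Operator

lemma opNorm_eq_norm (T : Matrix (Fin 2) (Fin 2) ℝ) : opNorm T = ‖T‖ := rfl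

section UnitaryInvariance

variable {𝕜 n : Type*} [RCLike 𝕜] [Fintype n] [DecidableEq n] {U : Matrix n n 𝕜}

lemma norm_smul_mul_mem_unitaryGroup (c : 𝕜) (D : Matrix n n 𝕜) (hU : U ∈ unitaryGroup n 𝕜) :
    ‖c • (D * U)‖ = ‖c‖ * ‖D‖ := by
  rw [norm_smul, CStarRing.norm_mul_mem_unitary D hU]

lemma norm_inv_smul_mul_mem_unitaryGroup {c : 𝕜} (hc : c ≠ 0) {D : Matrix n n 𝕜}
    (hD : IsUnit D.det) (hU : U ∈ unitaryGroup n 𝕜) :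
    ‖(c • (D * U))⁻¹‖ = ‖c‖⁻¹ * ‖D⁻¹‖ := by
  have hinv : (c • (D * U))⁻¹ = c⁻¹ • (star U * D⁻¹) := by
    refine inv_eq_left_inv ?_
    calc c⁻¹ • (star U * D⁻¹) * c • (D * U) = (c⁻¹ * c) • (star U * (D⁻¹ * D) * U) := by
          simp only [smul_mul_smul_comm, Matrix.mul_assoc]
      _ = 1 := by
          rw [inv_mul_cancel₀ hc, nonsing_inv_mul D hD, Matrix.mul_one, one_smul,
            mem_unitaryGroup_iff'.1 hU]
  rw [hinv, norm_smul, norm_inv, CStarRing.norm_mem_unitary_mul _ (Unitary.star_mem hU)]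

end UnitaryInvariance

lemma norm_vecCons_two {E : Type*} [SeminormedAddGroup E] (a b : E) :
    ‖![a, b]‖ = max ‖a‖ ‖b‖ :=
  le_antisymm
    ((pi_norm_le_iff_of_nonneg (by positivity)).2
      (Fin.forall_fin_two.2 ⟨le_max_left _ _, le_max_right _ _⟩))
    (max_le (norm_le_pi_norm ![a, b] 0) (norm_le_pi_norm ![a, b] 1))

lemma rotation_mem_unitaryGroup (φ : ℝ) :
    !![cos φ, -sin φ; sin φ, cos φ] ∈ unitaryGroup (Fin 2) ℝ := by
  rw [mem_unitaryGroup_iff]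
  ext i j
  fin_cases i <;> fin_cases j <;> simp [mul_apply, Fin.sum_univ_two, ← sq, mul_comm]

section StretchRotation

variable {s c : ℝ} (hs : 1 ≤ s) (hc : 0 < c) (φ : ℝ)
include hs hc

lemma norm_diag_mul_smul_rotation :
    ‖!![s, 0; 0, s⁻¹] * (c • !![cos φ, -sin φ; sin φ, cos φ])‖ = c * s := by
  have hs₀ : 0 < s := by linarith
  rw [Matrix.mul_smul, norm_smul_mul_mem_unitaryGroup _ _ (rotation_mem_unitaryGroup φ),
    ← diagonal_vec2, l2_opNorm_diagonal, norm_vecCons_two, Real.norm_of_nonneg hc.le,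
    Real.norm_of_nonneg hs₀.le, Real.norm_of_nonneg (inv_nonneg.2 hs₀.le),
    max_eq_left ((inv_le_one_of_one_le₀ hs).trans hs)]

lemma norm_inv_diag_mul_smul_rotation :
    ‖(!![s, 0; 0, s⁻¹] * (c • !![cos φ, -sin φ; sin φ, cos φ]))⁻¹‖ = c⁻¹ * s := by
  have hs₀ : 0 < s := by linarith
  have hinv : (diagonal ![s, s⁻¹])⁻¹ = diagonal ![s⁻¹, s] := by
    refine inv_eq_left_inv ?_
    rw [diagonal_mul_diagonal, ← diagonal_one]
    congr 1
    ext i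
    fin_cases i <;> simp [hs₀.ne']
  have hdet : IsUnit (diagonal ![s, s⁻¹]).det := by
    simp [det_diagonal, Fin.prod_univ_two, hs₀.ne']
  rw [Matrix.mul_smul, ← diagonal_vec2,
    norm_inv_smul_mul_mem_unitaryGroup hc.ne' hdet (rotation_mem_unitaryGroup φ), hinv,
    l2_opNorm_diagonal, norm_vecCons_two, Real.norm_of_nonneg hc.le,
    Real.norm_of_nonneg hs₀.le, Real.norm_of_nonneg (inv_nonneg.2 hs₀.le),
    max_eq_right ((inv_le_one_of_one_le₀ hs).trans hs)]

end StretchRotation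

lemma log_le_max_log_mul_log_inv_mul {s c : ℝ} (hs : 0 < s) (hc : 0 < c) :
    log s ≤ max (log (c * s)) (log (c⁻¹ * s)) := by
  rw [log_mul hc.ne' hs.ne', log_mul (inv_ne_zero hc.ne') hs.ne', log_inv]
  rcases le_total 0 (log c) with h | h
  · exact le_max_of_le_left (by linarith)
  · exact le_max_of_le_right (by linarith)

lemma lipschitzWith_arctan_mul_exp (u : ℝ) :
    LipschitzWith (1 / 2) fun x => arctan (u * exp x) := by
  have hderiv (x : ℝ) : HasDerivAt (fun x => arctan (u * exp x))
      (1 / (1 + (u * exp x) ^ 2) * (u * exp x)) x :=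
    ((hasDerivAt_exp x).const_mul u).arctan
  refine lipschitzWith_of_nnnorm_deriv_le (fun x => (hderiv x).differentiableAt) fun x => ?_
  rw [(hderiv x).deriv, ← NNReal.coe_le_coe, coe_nnnorm, Real.norm_eq_abs]
  set v := u * exp x
  have hpos : 0 < 1 + v ^ 2 := by positivity
  rw [one_div_mul_eq_div, abs_div, abs_of_pos hpos, div_le_iff₀ hpos, NNReal.coe_div,
    NNReal.coe_one, NNReal.coe_two]
  nlinarith [sq_abs v, sq_nonneg (|v| - 1)]

lemma abs_arctan_div_sub_arctan_le (u : ℝ) {a : ℝ} (ha : 0 < a) :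
    |arctan (u / a) - arctan u| ≤ |log a| / 2 := by
  have := (lipschitzWith_arctan_mul_exp u).dist_le_mul (-log a) 0
  rwa [exp_neg, exp_log ha, exp_zero, mul_one, ← div_eq_mul_inv, Real.dist_eq, Real.dist_eq,
    sub_zero, abs_neg, NNReal.coe_div, NNReal.coe_one, NNReal.coe_two, one_div_mul_eq_div] at this

lemma GT.abs_theta_sub_le_of_Ioo (g : GT) {C : ℝ}
    (h : ∀ t ∈ Ioo (-(1 : ℝ) / 2) (1 / 2), |g.θ t - t| ≤ C) (t : ℝ) : |g.θ t - t| ≤ C := by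
  have hper : Function.Periodic (fun t => |g.θ t - t|) 1 := fun t => by
    simp only [g.per, add_sub_add_right_eq_sub]
  have hclosed : IsClosed {t | |g.θ t - t| ≤ C} :=
    isClosed_le (g.cont.sub continuous_id).abs continuous_const
  have hIcc : Icc (-(1 : ℝ) / 2) (1 / 2) ⊆ {t | |g.θ t - t| ≤ C} := by
    rw [← closure_Ioo (by norm_num)]
    exact closure_minimal h hclosed
  obtain ⟨y, hy, hty⟩ := hper.exists_mem_Ico one_pos t (-(1 : ℝ) / 2)
  rw [hty]
  exact hIcc ⟨hy.1, by linarith [hy.2]⟩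

lemma GT.abs_theta_sub_le_half_log {a : ℝ} (ha : 1 ≤ a) (g : GT)
    (hgθ : ∀ t ∈ Ioo (-(1 : ℝ) / 2) (1 / 2),
      g.θ t = (1 / π) * arctan (tan (π * t) / a)) (t : ℝ) :
    |g.θ t - t| ≤ (1 / 2) * log a := by
  refine g.abs_theta_sub_le_of_Ioo (fun t ht => ?_) t
  have harctan : arctan (tan (π * t)) = π * t :=
    arctan_tan (by nlinarith [ht.1, pi_pos]) (by nlinarith [ht.2, pi_pos])
  calc |g.θ t - t| = π⁻¹ * |arctan (tan (π * t) / a) - arctan (tan (π * t))| := by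
        rw [hgθ t ht, harctan, ← abs_of_pos (inv_pos.2 pi_pos), ← abs_mul]
        congr 1
        field_simp
    _ ≤ 1 * (|log a| / 2) :=
        mul_le_mul (inv_le_one_of_one_le₀ (by linarith [pi_gt_three]))
          (abs_arctan_div_sub_arctan_le _ (by linarith)) (abs_nonneg _) zero_le_one
    _ = (1 / 2) * log a := by rw [abs_of_nonneg (log_nonneg ha)]; ring

/-- Let `a ≥ 1` and let `g ∈ G` have `T_g = diag(√a, 1/√a)` and
`θ_g(t) = (1/π) arctan(tan(πt)/a)` (on a fundamental domain, extended compatibly).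
Let `λ ∈ ℂ` act through the subgroup of lifts of conformal maps, `λ = x + iy` corresponding
to `T_λ = e^{−πy} R_{πx}` and `θ_λ(t) = t + x`.  Then `inf_{λ ∈ ℂ} Δ(g·λ) = (1/2) log a`. -/
theorem stmt_9 (a : ℝ) (ha : 1 ≤ a) (g : GT)
    (hgT : g.T = !![Real.sqrt a, 0; 0, (Real.sqrt a)⁻¹])
    (hgθ : ∀ t ∈ Set.Ioo (-(1 : ℝ)/2) (1/2),
      g.θ t = (1/π) * Real.arctan (Real.tan (π * t) / a))
    (conf : ℂ → GT)
    (hconfT : ∀ l : ℂ, (conf l).T = Real.exp (-π * l.im) •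
      !![Real.cos (π * l.re), -Real.sin (π * l.re);
         Real.sin (π * l.re),  Real.cos (π * l.re)])
    (hconfθ : ∀ (l : ℂ) (t : ℝ), (conf l).θ t = t + l.re) :
    IsGLB (Set.range fun l : ℂ => (GT.mul g (conf l)).Δ) ((1/2) * Real.log a) := by
  have hs : 1 ≤ √a := one_le_sqrt.2 ha
  have hlog : log √a = 1 / 2 * log a := by rw [log_sqrt (by linarith)]; ring
  have hT (l : ℂ) : (g.mul (conf l)).T = !![√a, 0; 0, (√a)⁻¹] *
      (exp (-π * l.im) • !![cos (π * l.re), -sin (π * l.re); sin (π * l.re), cos (π * l.re)]) := by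
    rw [← hgT, ← hconfT]
    rfl
  have hmatrix (l : ℂ) : max (log (opNorm (g.mul (conf l)).T)) (log (opNorm (g.mul (conf l)).T⁻¹))
      = max (log (exp (-π * l.im) * √a)) (log ((exp (-π * l.im))⁻¹ * √a)) := by
    rw [opNorm_eq_norm, opNorm_eq_norm, hT, norm_diag_mul_smul_rotation hs (exp_pos _),
      norm_inv_diag_mul_smul_rotation hs (exp_pos _)]
  have hlower (l : ℂ) : 1 / 2 * log a ≤ (g.mul (conf l)).Δ := by
    rw [← hlog]
    calc log √a ≤ max (log (exp (-π * l.im) * √a)) (log ((exp (-π * l.im))⁻¹ * √a)) :=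
          log_le_max_log_mul_log_inv_mul (by linarith) (exp_pos _)
      _ ≤ (g.mul (conf l)).Δ := hmatrix l ▸ le_max_right _ _
  have hzero : (g.mul (conf 0)).Δ ≤ 1 / 2 * log a := by
    refine max_le (ciSup_le fun t => ?_) ?_
    · simpa only [GT.mul, Function.comp_apply, hconfθ, Complex.zero_re, add_zero]
        using g.abs_theta_sub_le_half_log ha hgθ t
    · rw [hmatrix, Complex.zero_im, mul_zero, exp_zero, inv_one, one_mul, max_self, hlog]
  exact IsLeast.isGLB ⟨⟨0, le_antisymm hzero (hlower 0)⟩, by rintro _ ⟨l, rfl⟩; exact hlower l⟩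
end

section
/- If A and B are hearts of bounded (non-degenerate) t-structures on a triangulated category C and A ⊆ B as full subcategories, then A = B. -/
open CategoryTheory Triangulated

variable {C : Type*} [Category C] [Preadditive C] [Limits.HasZeroObject C]
  [HasShift C ℤ] [∀ n : ℤ, (shiftFunctor C n).Additive] [Pretriangulated C]

/-- The heart of a t-structure: the objects which are both `≤ 0` and `≥ 0`. -/
def heartSet (t : TStructure C) : Set C := {X : C | t.le 0 X ∧ t.ge 0 X}

/-- A t-structure is bounded (non-degenerate) if every object is `≤ n` and `≥ m` for some
integers `n, m`, equivalently every object has a finite filtration with factors in shifts of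
the heart. -/
def IsBoundedT (t : TStructure C) : Prop := ∀ X : C, ∃ n m : ℤ, t.le n X ∧ t.ge m X

/-!
If `t` is bounded, every object lies in `t.ge m ⊓ t.le n` for some `m ≤ n` and is an iterated
extension of shifts of objects of the heart of `t`. Since aisles and coaisles are closed under
extensions, `heartSet t ⊆ heartSet t'` gives `t.le n ⊆ t'.le n` and `t.ge n ⊆ t'.ge n`.
The reverse inclusions follow because `t.le n` and `t.ge (n + 1)` are each other's orthogonals,
so the two t-structures coincide.
-/

namespace CategoryTheory.Triangulated.TStructure

open Pretriangulated

variable {t t' : TStructure C}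

lemma mem_heartSet_iff (X : C) : X ∈ heartSet t ↔ t.IsLE X 0 ∧ t.IsGE X 0 := by
  simp [heartSet]

lemma isLE_and_isGE_of_heartSet_subset (h : heartSet t ⊆ heartSet t') (X : C) (n : ℤ)
    [t.IsLE X n] [t.IsGE X n] : t'.IsLE X n ∧ t'.IsGE X n := by
  have hX : X⟦n⟧ ∈ heartSet t :=
    (mem_heartSet_iff _).2 ⟨t.isLE_shift X n n 0, t.isGE_shift X n n 0⟩
  obtain ⟨hLE, hGE⟩ := (mem_heartSet_iff _).1 (h hX)
  exact ⟨(t'.isLE_shift_iff X n n 0).1 hLE, (t'.isGE_shift_iff X n n 0).1 hGE⟩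

/-- Induction on `n - m`, splitting off the top degree by the triangle `A ⟶ X ⟶ B ⟶ A⟦1⟧`
with `A ≤ n - 1` and `B ≥ n`. -/
lemma isGE_and_isLE_of_heartSet_subset_of_isGE_of_isLE (h : heartSet t ⊆ heartSet t')
    (k : ℕ) : ∀ (X : C) (m n : ℤ), n = m + k → t.IsGE X m → t.IsLE X n →
      t'.IsGE X m ∧ t'.IsLE X n := by
  induction k with
  | zero =>
    rintro X m n hn _ _
    obtain rfl : n = m := by simpa using hn
    exact (isLE_and_isGE_of_heartSet_subset h X n).symm
  | succ k ih =>
    intro X m n hn hGE hLE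
    obtain ⟨A, B, hA, hB, f, g, δ, mem⟩ := t.exists_triangle X (n - 1) n (by omega)
    rw [le_iff_isLE] at hA
    rw [ge_iff_isGE] at hB
    have hBLE : t.IsLE B n := by
      have := t.isLE_shift A (n - 1) 1 (n - 2)
      have := t.isLE_of_le (A⟦(1 : ℤ)⟧) (n - 2) n
      exact t.isLE₂ _ (rot_of_distTriang _ mem) _ hLE this
    have hAGE : t.IsGE A m := by
      have := t.isGE_shift B n (-1) (n + 1)
      have := t.isGE_of_ge (B⟦(-1 : ℤ)⟧) m (n + 1) (by omega)
      exact t.isGE₂ _ (inv_rot_of_distTriang _ mem) _ this hGE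
    obtain ⟨hA₁, hA₂⟩ := ih A m (n - 1) (by omega) hAGE hA
    obtain ⟨hB₁, hB₂⟩ := isLE_and_isGE_of_heartSet_subset h B n
    exact ⟨t'.isGE₂ _ mem _ hA₁ (t'.isGE_of_ge B m n (by omega)),
      t'.isLE₂ _ mem _ (t'.isLE_of_le A (n - 1) n) hB₁⟩

lemma isGE_of_heartSet_subset (ht : IsBoundedT t) (h : heartSet t ⊆ heartSet t')
    (X : C) (m : ℤ) [t.IsGE X m] : t'.IsGE X m := by
  obtain ⟨n, -, hn, -⟩ := ht X
  rw [le_iff_isLE] at hn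
  exact (isGE_and_isLE_of_heartSet_subset_of_isGE_of_isLE h (max n m - m).toNat X m
    (max n m) (by omega) inferInstance (t.isLE_of_le X n (max n m))).1

lemma isLE_of_heartSet_subset (ht : IsBoundedT t) (h : heartSet t ⊆ heartSet t')
    (X : C) (n : ℤ) [t.IsLE X n] : t'.IsLE X n := by
  obtain ⟨-, m, -, hm⟩ := ht X
  rw [ge_iff_isGE] at hm
  exact (isGE_and_isLE_of_heartSet_subset_of_isGE_of_isLE h (n - min m n).toNat X (min m n)
    n (by omega) (t.isGE_of_ge X (min m n) m) inferInstance).2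

/-- Being `≤ n` is left orthogonality to `≥ n + 1`, and `t.ge (n + 1) ⊆ t'.ge (n + 1)`. -/
lemma isLE_iff_of_heartSet_subset (ht : IsBoundedT t) (h : heartSet t ⊆ heartSet t')
    (X : C) (n : ℤ) : t'.IsLE X n ↔ t.IsLE X n := by
  refine ⟨fun _ ↦ ?_, fun _ ↦ isLE_of_heartSet_subset ht h X n⟩
  rw [t.isLE_iff_orthogonal n (n + 1) rfl]
  intro Y f _
  have := isGE_of_heartSet_subset ht h Y (n + 1)
  exact t'.zero f n (n + 1)

lemma isGE_iff_of_heartSet_subset (ht : IsBoundedT t) (h : heartSet t ⊆ heartSet t')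
    (X : C) (n : ℤ) : t'.IsGE X n ↔ t.IsGE X n := by
  refine ⟨fun _ ↦ ?_, fun _ ↦ isGE_of_heartSet_subset ht h X n⟩
  rw [t.isGE_iff_orthogonal (n - 1) n (by omega)]
  intro Y f _
  have := isLE_of_heartSet_subset ht h Y (n - 1)
  exact t'.zero f (n - 1) n

end CategoryTheory.Triangulated.TStructure

open TStructure in
theorem stmt_14_general (t t' : TStructure C) (ht : IsBoundedT t)
    (h : heartSet t ⊆ heartSet t') :
    heartSet t = heartSet t' := by
  ext X
  rw [mem_heartSet_iff, mem_heartSet_iff, isLE_iff_of_heartSet_subset ht h,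
    isGE_iff_of_heartSet_subset ht h]

/-- If `A` and `B` are hearts of bounded (non-degenerate) t-structures on a
triangulated category `C` and `A ⊆ B` as full subcategories, then `A = B`: distinct hearts
of bounded t-structures cannot be nested. -/
theorem stmt_14 (t t' : TStructure C) (ht : IsBoundedT t) (ht' : IsBoundedT t')
    (h : heartSet t ⊆ heartSet t') :
    heartSet t = heartSet t' :=
  stmt_14_general t t' ht h
end
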